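/- arXiv:1605.00081 — 2 statements merged into one kernel-verified Lean document; each statement's English description precedes it below -/
import Mathlib

section
/- Let ⊗ be a continuous t-norm on [0,1] and X a partially ordered compact space. The assignment A ↦ Φ_A is a bijection from the set of closed upper subsets of X onto the set of maps Φ : CX → [0,1] satisfying (Mon), (Act), (Sup), (Ten)lax and (Min). If moreover ⊗ has no nilpotent elements, then A ↦ Φ_A is a bijection from the set of closed upper subsets of X onto the set of maps Φ : CX → [0,1] satisfying (Mon), (Act), (Sup) and (Min). -/
/-!
Injectivity: for a closed upper set `A` one has `Anti(Φ_A) = A`, because a point outside `A` is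
separated from `A` by a continuous antitone map. This is Nachbin's Urysohn lemma for compact
pospaces, obtained from Mathlib's Urysohn construction by keeping every open set of the
construction upper, which compact pospaces allow.

Surjectivity: `Φ = Φ_{Anti(Φ)}`. If `Φ ψ > c > Φ_{Anti(Φ)} ψ`, then `K = {ψ ≥ c}` misses
`Anti(Φ)`, so compactness, (Sup) and (Min) give `χ` with `Φ χ = 0` and `χ ≥ d > 0` on `K`.
Composing `χ` with a ramp yields maps `ξ` equal to `1` on `K` with `u ⊗ Φ ξ = 0` for every
`u < d`, while `ψ ≤ c ∨ ξ` and (Sup) force `Φ ξ ≥ Φ ψ > 0`. Without nilpotents this is absurd,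
as `min u (Φ ξ)` squares to `0`. Under (Ten)lax the infimum `q` of these values `Φ ξ` is a
positive idempotent, and idempotents of a continuous t-norm act as `min` below them
(divisibility), so `u ⊗ Φ ξ ≥ u ⊗ q = u` for `u ≤ q`.
-/

open unitInterval Set

/-- A continuous t-norm on the unit interval `[0,1]`. -/
structure ContinuousTNorm where
  mul : I → I → I
  comm : ∀ x y, mul x y = mul y x
  assoc : ∀ x y z, mul (mul x y) z = mul x (mul y z)
  mono : ∀ ⦃x₁ x₂ y₁ y₂ : I⦄, x₁ ≤ x₂ → y₁ ≤ y₂ → mul x₁ y₁ ≤ mul x₂ y₂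
  continuous : Continuous fun p : I × I => mul p.1 p.2
  one_mul' : ∀ x, mul 1 x = x

/-- The `n`-fold `⊗`-power `xⁿ`. -/
def ContinuousTNorm.pow (T : ContinuousTNorm) (x : I) : ℕ → I
  | 0 => 1
  | n + 1 => T.mul x (T.pow x n)


/-- A continuous antitone (monotone of type `X → [0,1]ᵒᵖ`) map. -/
structure CMap (X : Type*) [TopologicalSpace X] [Preorder X] where
  toFun : X → I
  continuous' : Continuous toFun
  antitone' : Antitone toFun

namespace CMap

variable {X : Type*} [TopologicalSpace X] [Preorder X]

/-- The constant map `1`. -/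
def one : CMap X := ⟨fun _ => 1, continuous_const, fun _ _ _ => le_rfl⟩

/-- Pointwise tensor `ψ₁ ⊗ ψ₂`. -/
def tens (T : ContinuousTNorm) (ψ₁ ψ₂ : CMap X) : CMap X where
  toFun x := T.mul (ψ₁.toFun x) (ψ₂.toFun x)
  continuous' := T.continuous.comp (ψ₁.continuous'.prodMk ψ₂.continuous')
  antitone' := fun _ _ h => T.mono (ψ₁.antitone' h) (ψ₂.antitone' h)

/-- Pointwise action `u ⊗ ψ` of a scalar `u ∈ [0,1]`. -/
def smul (T : ContinuousTNorm) (u : I) (ψ : CMap X) : CMap X where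
  toFun x := T.mul u (ψ.toFun x)
  continuous' := T.continuous.comp (continuous_const.prodMk ψ.continuous')
  antitone' := fun _ _ h => T.mono le_rfl (ψ.antitone' h)

/-- Pointwise binary supremum `ψ₁ ∨ ψ₂`. -/
noncomputable def sup (ψ₁ ψ₂ : CMap X) : CMap X where
  toFun x := max (ψ₁.toFun x) (ψ₂.toFun x)
  continuous' := ψ₁.continuous'.max ψ₂.continuous'
  antitone' := fun _ _ h => max_le_max (ψ₁.antitone' h) (ψ₂.antitone' h)

/-- Truncated subtraction in `[0,1]`. -/
noncomputable def tsubI (a u : I) : I :=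
  ⟨max ((a : ℝ) - u) 0, ⟨le_max_right _ _,
    max_le (by linarith [a.2.2, u.2.1]) zero_le_one⟩⟩

/-- Pointwise truncated subtraction `ψ ⊖ u`. -/
noncomputable def tsub (ψ : CMap X) (u : I) : CMap X where
  toFun x := tsubI (ψ.toFun x) u
  continuous' := by
    apply Continuous.subtype_mk
    exact ((continuous_subtype_val.comp ψ.continuous').sub continuous_const).max continuous_const
  antitone' := fun a b h =>
    Subtype.mk_le_mk.mpr
      (max_le_max (sub_le_sub_right (Subtype.coe_le_coe.2 (ψ.antitone' h)) _) le_rfl)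

end CMap


section Conditions

variable {X : Type*} [TopologicalSpace X] [Preorder X]

/-- `(Mon)`: `Φ` is monotone. -/
def Mon (Φ : CMap X → I) : Prop :=
  ∀ ψ₁ ψ₂ : CMap X, (∀ x, ψ₁.toFun x ≤ ψ₂.toFun x) → Φ ψ₁ ≤ Φ ψ₂

/-- `(Act)`: `Φ(u ⊗ ψ) = u ⊗ Φ(ψ)`. -/
def Act (T : ContinuousTNorm) (Φ : CMap X → I) : Prop :=
  ∀ (u : I) (ψ : CMap X), Φ (CMap.smul T u ψ) = T.mul u (Φ ψ)

/-- `(Sup)`: `Φ(ψ₁ ∨ ψ₂) = Φ(ψ₁) ∨ Φ(ψ₂)`. -/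
def SupC (Φ : CMap X → I) : Prop :=
  ∀ ψ₁ ψ₂ : CMap X, Φ (ψ₁.sup ψ₂) = max (Φ ψ₁) (Φ ψ₂)

/-- `(Ten)lax`: `Φ(ψ₁ ⊗ ψ₂) ≤ Φ(ψ₁) ⊗ Φ(ψ₂)`. -/
def TenLax (T : ContinuousTNorm) (Φ : CMap X → I) : Prop :=
  ∀ ψ₁ ψ₂ : CMap X, Φ (CMap.tens T ψ₁ ψ₂) ≤ T.mul (Φ ψ₁) (Φ ψ₂)

/-- `(Ten)`: `Φ(ψ₁ ⊗ ψ₂) = Φ(ψ₁) ⊗ Φ(ψ₂)`. -/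
def TenC (T : ContinuousTNorm) (Φ : CMap X → I) : Prop :=
  ∀ ψ₁ ψ₂ : CMap X, Φ (CMap.tens T ψ₁ ψ₂) = T.mul (Φ ψ₁) (Φ ψ₂)

/-- `(Top)`: `Φ(1) = 1`. -/
def TopC (Φ : CMap X → I) : Prop := Φ CMap.one = 1

/-- `(Min)`: `Φ(ψ ⊖ u) = Φ(ψ) ⊖ u`. -/
noncomputable def MinC (Φ : CMap X → I) : Prop :=
  ∀ (u : I) (ψ : CMap X), Φ (ψ.tsub u) = CMap.tsubI (Φ ψ) u

/-- Condition `(A)`. -/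
def CondA (Φ : CMap X → I) : Prop :=
  ∀ (x : X) (ψ : CMap X), Φ ψ = 0 → 0 < ψ.toFun x →
    ∃ ψ' : CMap X, ψ'.toFun x = 1 ∧ Φ ψ' = 0

/-- `Zero(Φ) = ⋂ {Zero ψ | Φ ψ = 0}`. -/
def ZeroPhi (Φ : CMap X → I) : Set X := {x | ∀ ψ : CMap X, Φ ψ = 0 → ψ.toFun x = 0}

/-- `Anti(Φ)`. -/
def AntiPhi (Φ : CMap X → I) : Set X := {x | ∀ ψ : CMap X, ψ.toFun x ≤ Φ ψ}

/-- `Φ_A(ψ) = sup_{x ∈ A} ψ(x)`, with `Φ_∅ = 0`. -/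
noncomputable def PhiA (A : Set X) (ψ : CMap X) : I :=
  ⟨sSup ((fun x => (ψ.toFun x : ℝ)) '' A),
   ⟨Real.sSup_nonneg (by rintro r ⟨x, _, rfl⟩; exact (ψ.toFun x).2.1),
    Real.sSup_le (by rintro r ⟨x, _, rfl⟩; exact (ψ.toFun x).2.2) zero_le_one⟩⟩

end Conditions

namespace ContinuousTNorm

variable (T : ContinuousTNorm)

protected lemma mul_one (x : I) : T.mul x 1 = x := T.comm x 1 ▸ T.one_mul' x

lemma mul_le_left (x y : I) : T.mul x y ≤ x :=
  (T.mono le_rfl le_one').trans_eq (T.mul_one x)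

protected lemma mul_zero (x : I) : T.mul x 0 = 0 :=
  le_antisymm ((T.comm x 0).trans_le (T.mul_le_left 0 x)) nonneg'

lemma continuous_mul_left (x : I) : Continuous (T.mul x) :=
  T.continuous.comp (continuous_const.prodMk continuous_id)

protected lemma pow_two (v : I) : T.pow v 2 = T.mul v v := by
  simp only [pow, T.mul_one]

lemma exists_mul_eq_of_le {x y : I} (h : y ≤ x) : ∃ z, T.mul x z = y :=
  intermediate_value_univ 0 1 (T.continuous_mul_left x)
    ⟨(T.mul_zero x).trans_le nonneg', h.trans_eq (T.mul_one x).symm⟩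

lemma mul_eq_right_of_mul_self_eq {p x : I} (hp : T.mul p p = p) (h : x ≤ p) :
    T.mul p x = x := by
  obtain ⟨z, rfl⟩ := T.exists_mul_eq_of_le h
  rw [← T.assoc, hp]

lemma mul_self_sInf_eq {S : Set I} (h : ∀ a ∈ S, ∃ b ∈ S, b ≤ T.mul a a) :
    T.mul (sInf S) (sInf S) = sInf S := by
  have hmono : Monotone fun a => T.mul a a := fun a b hab => T.mono hab hab
  have hcont : Continuous fun a => T.mul a a :=
    T.continuous.comp (continuous_id.prodMk continuous_id)
  refine le_antisymm (T.mul_le_left _ _) ?_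
  rw [hmono.map_sInf_of_continuousAt hcont.continuousAt (T.mul_one 1)]
  refine le_sInf ?_
  rintro _ ⟨a, ha, rfl⟩
  obtain ⟨b, hb, hba⟩ := h a ha
  exact (sInf_le hb).trans hba

lemma exists_pow_eq_zero_of_mul_eq_zero {u a : I} (hu : u ≠ 0) (ha : a ≠ 0)
    (h : T.mul u a = 0) : ∃ v ≠ 0, T.pow v 2 = 0 := by
  refine ⟨min u a, by rcases min_choice u a with e | e <;> rwa [e], ?_⟩
  rw [T.pow_two]
  exact le_antisymm (h ▸ T.mono (min_le_left u a) (min_le_right u a)) nonneg'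

lemma mul_ne_zero_of_le_idempotent {q u a : I} (hq : T.mul q q = q) (hu : u ≠ 0)
    (huq : u ≤ q) (hqa : q ≤ a) : T.mul u a ≠ 0 := by
  intro h
  refine hu (le_antisymm ?_ nonneg')
  calc u = T.mul q u := (T.mul_eq_right_of_mul_self_eq hq huq).symm
    _ ≤ T.mul a u := T.mono hqa le_rfl
    _ = 0 := T.comm a u ▸ h

end ContinuousTNorm

namespace Urysohns.CU

variable {X : Type*} [TopologicalSpace X] [Preorder X]

lemma antitone_approx (c : CU fun _ u : Set X => IsUpperSet u) (n : ℕ) :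
    Antitone (c.approx n) := by
  induction n generalizing c with
  | zero =>
    intro x y hxy
    by_cases hy : y ∈ c.Uᶜ
    · simp [approx, hy, c.P_C_U.compl hxy hy]
    · simpa [approx, hy] using c.approx_nonneg 0 x
  | succ n ih =>
    exact fun x y hxy => midpoint_le_midpoint (ih c.left hxy) (ih c.right hxy)

lemma antitone_lim (c : CU fun _ u : Set X => IsUpperSet u) : Antitone c.lim :=
  fun _ _ hxy => ciSup_mono (c.bddAbove_range_approx _) fun n => c.antitone_approx n hxy

end Urysohns.CU

section OrderedUrysohn

variable {X : Type*} [TopologicalSpace X] [CompactSpace X]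

lemma isClosed_upperClosure_of_compactSpace [Preorder X] [OrderClosedTopology X] {s : Set X}
    (hs : IsClosed s) : IsClosed (upperClosure s : Set X) := by
  have : (upperClosure s : Set X) = Prod.snd '' {p : X × X | p.1 ∈ s ∧ p.1 ≤ p.2} := by
    ext x
    simp [mem_upperClosure]
  rw [this]
  exact isClosedMap_snd_of_compactSpace _ ((hs.preimage continuous_fst).inter isClosed_le_prod)

lemma isClosed_lowerClosure_of_compactSpace [Preorder X] [OrderClosedTopology X] {s : Set X}
    (hs : IsClosed s) : IsClosed (lowerClosure s : Set X) := by
  have : (lowerClosure s : Set X) = Prod.fst '' {p : X × X | p.2 ∈ s ∧ p.1 ≤ p.2} := by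
    ext x
    simp [mem_lowerClosure]
  rw [this]
  exact isClosedMap_fst_of_compactSpace _ ((hs.preimage continuous_snd).inter isClosed_le_prod)

variable [PartialOrder X] [OrderClosedTopology X]

lemma exists_isOpen_isUpperSet_closure_subset {c u : Set X} (hc : IsClosed c) (hu : IsOpen u)
    (huu : IsUpperSet u) (hcu : c ⊆ u) :
    ∃ v, IsOpen v ∧ IsUpperSet v ∧ c ⊆ v ∧ closure v ⊆ u := by
  obtain ⟨w, hw, hcw, hwu⟩ := normal_exists_closure_subset
    (isClosed_upperClosure_of_compactSpace hc) hu (upperClosure_min hcu huu)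
  -- the largest upper set inside `w`
  refine ⟨(lowerClosure wᶜ : Set X)ᶜ,
    (isClosed_lowerClosure_of_compactSpace hw.isClosed_compl).isOpen_compl,
    (lowerClosure wᶜ).lower.compl, ?_, ?_⟩
  · rintro x hx ⟨y, hyw, hxy⟩
    exact hyw (hcw (mem_upperClosure.2 ⟨x, hx, hxy⟩))
  · exact (closure_mono (compl_subset_comm.1 subset_lowerClosure)).trans hwu

theorem exists_antitone_continuous_zero_one {s t : Set X} (hs : IsClosed s) (ht : IsClosed t)
    (htl : IsLowerSet t) (hst : Disjoint s t) :
    ∃ f : C(X, ℝ), Antitone f ∧ EqOn f 0 s ∧ EqOn f 1 t ∧ ∀ x, f x ∈ Icc (0 : ℝ) 1 := by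
  let c : Urysohns.CU fun _ u : Set X => IsUpperSet u :=
    { C := s
      U := tᶜ
      P_C_U := htl.compl
      closed_C := hs
      open_U := ht.isOpen_compl
      subset := disjoint_left.1 hst
      hP := by
        rintro c u c_closed u_upper u_open cu
        obtain ⟨v, v_open, v_upper, cv, hv⟩ :=
          exists_isOpen_isUpperSet_closure_subset c_closed u_open u_upper cu
        exact ⟨v, v_open, cv, hv, v_upper, u_upper⟩ }
  exact ⟨⟨c.lim, c.continuous_lim⟩, c.antitone_lim, c.lim_of_mem_C,
    fun x hx => c.lim_of_notMem_U _ fun h => h hx, c.lim_mem_Icc⟩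

end OrderedUrysohn

namespace unitInterval

noncomputable def ramp (u d : I) : C(I, I) :=
  ⟨fun a => projIcc 0 1 zero_le_one ((a - u) / (d - u)), by fun_prop⟩

variable {u d : I}

lemma monotone_ramp (h : u < d) : Monotone (ramp u d) := fun a b hab => by
  have : (0 : ℝ) < d - u := sub_pos.2 h
  exact monotone_projIcc zero_le_one (by gcongr)

lemma ramp_eq_zero (h : u < d) {a : I} (ha : a ≤ u) : ramp u d a = 0 := by
  have : (0 : ℝ) < d - u := sub_pos.2 h
  exact projIcc_of_le_left zero_le_one
    (div_nonpos_of_nonpos_of_nonneg (sub_nonpos.2 (show (a : ℝ) ≤ u from ha)) this.le)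

lemma ramp_eq_one (h : u < d) {a : I} (ha : d ≤ a) : ramp u d a = 1 := by
  have : (0 : ℝ) < d - u := sub_pos.2 h
  refine projIcc_of_right_le zero_le_one ((le_div_iff₀ this).2 ?_)
  linarith [show (d : ℝ) ≤ a from ha]

end unitInterval

namespace CMap

variable {X : Type*} [TopologicalSpace X] [Preorder X]

lemma coe_tsubI (a u : I) : (tsubI a u : ℝ) = max ((a : ℝ) - u) 0 := rfl

lemma tsubI_self (a : I) : tsubI a a = 0 := by
  ext
  simp [coe_tsubI]

lemma tsubI_zero (u : I) : tsubI 0 u = 0 := by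
  ext
  simp [coe_tsubI, u.2.1]

lemma tsubI_mono {a b : I} (u : I) (h : a ≤ b) : tsubI a u ≤ tsubI b u :=
  max_le_max (sub_le_sub_right (α := ℝ) h _) le_rfl

lemma tsubI_pos {a u : I} : 0 < tsubI a u ↔ u < a := by
  rw [← coe_pos, coe_tsubI, lt_max_iff, sub_pos]
  simp only [lt_self_iff_false, or_false]
  rfl

def comp (f : C(I, I)) (hf : Monotone f) (ψ : CMap X) : CMap X :=
  ⟨f ∘ ψ.toFun, f.continuous.comp ψ.continuous', hf.comp_antitone ψ.antitone'⟩

def eqOneOn (K : Set X) : Set (CMap X) := {ξ | ∀ y ∈ K, ξ.toFun y = 1}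

lemma tens_mem_eqOneOn (T : ContinuousTNorm) {K : Set X} {ξ₁ ξ₂ : CMap X}
    (h₁ : ξ₁ ∈ eqOneOn K) (h₂ : ξ₂ ∈ eqOneOn K) : tens T ξ₁ ξ₂ ∈ eqOneOn K := fun y hy => by
  simp only [tens, h₁ y hy, h₂ y hy, T.one_mul']

end CMap

section PhiA

variable {X : Type*} [TopologicalSpace X]

section Preorder

variable [Preorder X] {A : Set X} {ψ : CMap X}

lemma le_PhiA {x : X} (hx : x ∈ A) : ψ.toFun x ≤ PhiA A ψ :=
  le_csSup (s := (fun y => (ψ.toFun y : ℝ)) '' A) ⟨1, by rintro _ ⟨y, -, rfl⟩; exact le_one _⟩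
    (mem_image_of_mem _ hx)

lemma PhiA_le {c : I} (h : ∀ x ∈ A, ψ.toFun x ≤ c) : PhiA A ψ ≤ c :=
  Real.sSup_le (by rintro _ ⟨x, hx, rfl⟩; exact h x hx) c.2.1

lemma PhiA_empty (ψ : CMap X) : PhiA ∅ ψ = 0 :=
  le_antisymm (PhiA_le fun _ hx => hx.elim) nonneg'

lemma PhiA_eq_apply [CompactSpace X] (hA : IsClosed A) {f : I → I} (hf : Monotone f)
    (hf0 : f 0 = 0) {φ : CMap X} (h : ∀ x, φ.toFun x = f (ψ.toFun x)) :
    PhiA A φ = f (PhiA A ψ) := by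
  rcases A.eq_empty_or_nonempty with rfl | hne
  · rw [PhiA_empty, PhiA_empty, hf0]
  obtain ⟨x₀, hx₀, hmax⟩ := hA.isCompact.exists_isMaxOn hne ψ.continuous'.continuousOn
  have hψ : PhiA A ψ = ψ.toFun x₀ := le_antisymm (PhiA_le hmax) (le_PhiA hx₀)
  rw [hψ, ← h]
  exact le_antisymm (PhiA_le fun x hx => (h x).trans_le ((hf (hmax hx)).trans_eq (h x₀).symm))
    (le_PhiA hx₀)

lemma mon_PhiA : Mon (PhiA A) := fun _ _ h => PhiA_le fun x hx => (h x).trans (le_PhiA hx)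

lemma supC_PhiA : SupC (PhiA A) := fun _ _ =>
  le_antisymm (PhiA_le fun _ hx => max_le_max (le_PhiA hx) (le_PhiA hx))
    (max_le (mon_PhiA _ _ fun _ => le_max_left _ _) (mon_PhiA _ _ fun _ => le_max_right _ _))

lemma tenLax_PhiA (T : ContinuousTNorm) : TenLax T (PhiA A) := fun _ _ =>
  PhiA_le fun _ hx => T.mono (le_PhiA hx) (le_PhiA hx)

lemma act_PhiA [CompactSpace X] (T : ContinuousTNorm) (hA : IsClosed A) : Act T (PhiA A) :=
  fun u _ => PhiA_eq_apply hA (fun _ _ h => T.mono le_rfl h) (T.mul_zero u) fun _ => rfl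

lemma minC_PhiA [CompactSpace X] (hA : IsClosed A) : MinC (PhiA A) :=
  fun u _ => PhiA_eq_apply hA (fun _ _ => CMap.tsubI_mono u) (CMap.tsubI_zero u) fun _ => rfl

lemma isClosed_antiPhi (Φ : CMap X → I) : IsClosed (AntiPhi Φ) := by
  simp only [AntiPhi, ofPred_forall]
  exact isClosed_iInter fun ψ => isClosed_le ψ.continuous' continuous_const

lemma isUpperSet_antiPhi (Φ : CMap X → I) : IsUpperSet (AntiPhi Φ) :=
  fun _ _ hxy hx ψ => (ψ.antitone' hxy).trans (hx ψ)

lemma PhiA_antiPhi_le (Φ : CMap X → I) (ψ : CMap X) : PhiA (AntiPhi Φ) ψ ≤ Φ ψ :=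
  PhiA_le fun _ hx => hx ψ

end Preorder

lemma antiPhi_PhiA [CompactSpace X] [PartialOrder X] [OrderClosedTopology X] {A : Set X}
    (hA : IsClosed A) (hAu : IsUpperSet A) : AntiPhi (PhiA A) = A := by
  refine Subset.antisymm (fun x hx => ?_) fun x hx ψ => le_PhiA hx
  by_contra hxA
  obtain ⟨f, hf, hfA, hfx, hf01⟩ := exists_antitone_continuous_zero_one hA isClosed_Iic
    (isLowerSet_Iic x) (disjoint_left.2 fun y hy hyx => hxA (hAu hyx hy))
  let ψ : CMap X := ⟨fun y => ⟨f y, hf01 y⟩, by fun_prop, fun _ _ h => hf h⟩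
  have hψA : PhiA A ψ = 0 := le_antisymm (PhiA_le fun y hy => (Subtype.ext (hfA hy)).le) nonneg'
  have hψx : ψ.toFun x = 1 := Subtype.ext (hfx (mem_Iic.2 le_rfl))
  simpa [hψA, hψx] using hx ψ

end PhiA

section Representation

variable {X : Type*} [TopologicalSpace X] [Preorder X] (T : ContinuousTNorm) {Φ : CMap X → I}

lemma Phi_le_of_forall_le (hMon : Mon Φ) (hAct : Act T Φ) {ψ : CMap X} {c : I}
    (h : ∀ x, ψ.toFun x ≤ c) : Φ ψ ≤ c :=
  calc Φ ψ ≤ Φ (CMap.smul T c CMap.one) := hMon _ _ fun x => (h x).trans_eq (T.mul_one c).symm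
    _ = T.mul c (Φ CMap.one) := hAct c _
    _ ≤ c := T.mul_le_left _ _

lemma Phi_le_max_of_mem_eqOneOn (hMon : Mon Φ) (hAct : Act T Φ) (hSup : SupC Φ) {ψ ξ : CMap X}
    {c : I} (hξ : ξ ∈ CMap.eqOneOn {x | c ≤ ψ.toFun x}) : Φ ψ ≤ max c (Φ ξ) := by
  have hψ : ∀ x, ψ.toFun x ≤ ((CMap.smul T c CMap.one).sup ξ).toFun x := fun x => by
    by_cases hx : c ≤ ψ.toFun x
    · exact le_max_of_le_right ((hξ x hx).symm ▸ le_one')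
    · exact le_max_of_le_left ((le_of_not_ge hx).trans_eq (T.mul_one c).symm)
  calc Φ ψ ≤ Φ ((CMap.smul T c CMap.one).sup ξ) := hMon _ _ hψ
    _ = max (Φ (CMap.smul T c CMap.one)) (Φ ξ) := hSup _ _
    _ ≤ max c (Φ ξ) :=
      max_le_max (Phi_le_of_forall_le T hMon hAct fun _ => (T.mul_one c).le) le_rfl

lemma exists_mem_eqOneOn_mul_eq_zero (hMon : Mon Φ) (hAct : Act T Φ) {χ : CMap X}
    (hχ : Φ χ = 0) {K : Set X} {d : I} (hd : ∀ y ∈ K, d ≤ χ.toFun y) {u : I} (hu : u < d) :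
    ∃ ξ ∈ CMap.eqOneOn K, T.mul u (Φ ξ) = 0 := by
  refine ⟨χ.comp (ramp u d) (monotone_ramp hu), fun y hy => ramp_eq_one hu (hd y hy), ?_⟩
  rw [← hAct]
  refine le_antisymm (hχ ▸ hMon _ _ fun x => ?_) nonneg'
  change T.mul u (ramp u d (χ.toFun x)) ≤ χ.toFun x
  rcases le_or_gt (χ.toFun x) u with h | h
  · rw [ramp_eq_zero hu h, T.mul_zero]
    exact nonneg'
  · exact (T.mul_le_left _ _).trans h.le

lemma exists_Phi_eq_zero_forall_le (hMon : Mon Φ) (hAct : Act T Φ) (hSup : SupC Φ)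
    (hMin : MinC Φ) {K : Set X} (hK : IsCompact K) (hKA : Disjoint K (AntiPhi Φ)) :
    ∃ χ : CMap X, Φ χ = 0 ∧ ∃ d : I, 0 < d ∧ ∀ y ∈ K, d ≤ χ.toFun y := by
  refine hK.induction_on ?_ ?_ ?_ ?_
  · refine ⟨CMap.smul T 0 CMap.one, ?_, 1, zero_lt_one, fun _ h => h.elim⟩
    exact le_antisymm (Phi_le_of_forall_le T hMon hAct fun _ => (T.comm 0 1).trans_le
      (T.mul_zero 1).le) nonneg'
  · rintro S S' hSS' ⟨χ, hχ, d, hd, hχd⟩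
    exact ⟨χ, hχ, d, hd, fun y hy => hχd y (hSS' hy)⟩
  · rintro S S' ⟨χ, hχ, d, hd, hχd⟩ ⟨χ', hχ', d', hd', hχd'⟩
    refine ⟨χ.sup χ', by rw [hSup, hχ, hχ', max_self], min d d', lt_min hd hd', ?_⟩
    rintro y (hy | hy)
    · exact (min_le_left _ _).trans ((hχd y hy).trans (le_max_left _ _))
    · exact (min_le_right _ _).trans ((hχd' y hy).trans (le_max_right _ _))
  · intro x hx
    obtain ⟨φ, hφ⟩ : ∃ φ : CMap X, Φ φ < φ.toFun x := by
      simpa [AntiPhi] using disjoint_left.1 hKA hx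
    obtain ⟨d, hd, hdx⟩ := exists_between (CMap.tsubI_pos.2 hφ)
    have hopen : IsOpen {y | d < CMap.tsubI (φ.toFun y) (Φ φ)} :=
      isOpen_lt continuous_const (φ.tsub (Φ φ)).continuous'
    refine ⟨_, mem_nhdsWithin_of_mem_nhds (hopen.mem_nhds hdx), φ.tsub (Φ φ), ?_, d, hd,
      fun _ hy => hy.le⟩
    rw [hMin, CMap.tsubI_self]

lemma exists_eqOneOn_of_PhiA_antiPhi_lt [CompactSpace X] (hMon : Mon Φ) (hAct : Act T Φ)
    (hSup : SupC Φ) (hMin : MinC Φ) {ψ : CMap X} (h : PhiA (AntiPhi Φ) ψ < Φ ψ) :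
    ∃ K : Set X, (∀ ξ ∈ CMap.eqOneOn K, Φ ψ ≤ Φ ξ) ∧
      ∃ d : I, 0 < d ∧ ∀ u < d, ∃ ξ ∈ CMap.eqOneOn K, T.mul u (Φ ξ) = 0 := by
  obtain ⟨c, hc, hcΦ⟩ := exists_between h
  have hK : IsClosed {x | c ≤ ψ.toFun x} := isClosed_le continuous_const ψ.continuous'
  have hKA : Disjoint {x | c ≤ ψ.toFun x} (AntiPhi Φ) :=
    disjoint_left.2 fun x hx hxA => (hx.trans (le_PhiA hxA)).not_gt hc
  obtain ⟨χ, hχ, d, hd, hχd⟩ :=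
    exists_Phi_eq_zero_forall_le T hMon hAct hSup hMin hK.isCompact hKA
  refine ⟨_, fun ξ hξ => ?_, d, hd, fun u hu =>
    exists_mem_eqOneOn_mul_eq_zero T hMon hAct hχ hχd hu⟩
  exact (le_max_iff.1 (Phi_le_max_of_mem_eqOneOn T hMon hAct hSup hξ)).resolve_left hcΦ.not_ge

theorem PhiA_antiPhi_of_tenLax [CompactSpace X] (hMon : Mon Φ) (hAct : Act T Φ)
    (hSup : SupC Φ) (hTen : TenLax T Φ) (hMin : MinC Φ) : PhiA (AntiPhi Φ) = Φ := by
  funext ψ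
  refine le_antisymm (PhiA_antiPhi_le Φ ψ) (not_lt.1 fun h => ?_)
  obtain ⟨K, hK, d, hd, hzero⟩ := exists_eqOneOn_of_PhiA_antiPhi_lt T hMon hAct hSup hMin h
  set q := sInf (Φ '' CMap.eqOneOn K)
  have hq : T.mul q q = q := T.mul_self_sInf_eq fun _ ⟨ξ, hξ, hξq⟩ =>
    ⟨_, ⟨_, CMap.tens_mem_eqOneOn T hξ hξ, rfl⟩, hξq ▸ hTen ξ ξ⟩
  have hq0 : 0 < q :=
    nonneg'.trans_lt (h.trans_le (le_sInf (by rintro _ ⟨ξ, hξ, rfl⟩; exact hK ξ hξ)))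
  obtain ⟨u, hu, hud⟩ := exists_between (lt_min hq0 hd)
  obtain ⟨ξ, hξ, hξu⟩ := hzero u (hud.trans_le (min_le_right _ _))
  exact T.mul_ne_zero_of_le_idempotent hq hu.ne' (hud.le.trans (min_le_left _ _))
    (sInf_le ⟨ξ, hξ, rfl⟩) hξu

theorem PhiA_antiPhi_of_noNilpotent [CompactSpace X] (hMon : Mon Φ) (hAct : Act T Φ)
    (hSup : SupC Φ) (hMin : MinC Φ) (hNil : ∀ v : I, v ≠ 0 → ∀ n : ℕ, T.pow v n ≠ 0) :
    PhiA (AntiPhi Φ) = Φ := by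
  funext ψ
  refine le_antisymm (PhiA_antiPhi_le Φ ψ) (not_lt.1 fun h => ?_)
  obtain ⟨K, hK, d, hd, hzero⟩ := exists_eqOneOn_of_PhiA_antiPhi_lt T hMon hAct hSup hMin h
  obtain ⟨u, hu, hud⟩ := exists_between hd
  obtain ⟨ξ, hξ, hξu⟩ := hzero u hud
  obtain ⟨v, hv, hv2⟩ := T.exists_pow_eq_zero_of_mul_eq_zero hu.ne'
    (nonneg'.trans_lt (h.trans_le (hK ξ hξ))).ne' hξu
  exact hNil v hv 2 hv2

end Representation

/-- `A ↦ Φ_A` is a bijection from closed upper subsets of `X` onto the maps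
`Φ : CX → [0,1]` satisfying `(Mon)`, `(Act)`, `(Sup)`, `(Ten)lax` and `(Min)`; when the
t-norm has no nilpotent elements, `(Ten)lax` can be dropped. -/
theorem phiA_bijective (T : ContinuousTNorm) {X : Type*} [TopologicalSpace X] [CompactSpace X]
    [PartialOrder X] (hle : IsClosed {p : X × X | p.1 ≤ p.2}) :
    Set.BijOn (fun A : Set X => PhiA A) {A : Set X | IsClosed A ∧ IsUpperSet A}
      {Φ : CMap X → I | Mon Φ ∧ Act T Φ ∧ SupC Φ ∧ TenLax T Φ ∧ MinC Φ} ∧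
    ((∀ v : I, v ≠ 0 → ∀ n : ℕ, T.pow v n ≠ 0) →
      Set.BijOn (fun A : Set X => PhiA A) {A : Set X | IsClosed A ∧ IsUpperSet A}
        {Φ : CMap X → I | Mon Φ ∧ Act T Φ ∧ SupC Φ ∧ MinC Φ}) := by
  have : OrderClosedTopology X := ⟨hle⟩
  have hleft : ∀ A ∈ {A : Set X | IsClosed A ∧ IsUpperSet A}, AntiPhi (PhiA A) = A :=
    fun A hA => antiPhi_PhiA hA.1 hA.2
  have hanti (Φ : CMap X → I) : AntiPhi Φ ∈ {A : Set X | IsClosed A ∧ IsUpperSet A} :=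
    ⟨isClosed_antiPhi Φ, isUpperSet_antiPhi Φ⟩
  refine ⟨InvOn.bijOn ⟨hleft, ?_⟩ ?_ fun Φ _ => hanti Φ,
    fun hNil => InvOn.bijOn ⟨hleft, ?_⟩ ?_ fun Φ _ => hanti Φ⟩
  · exact fun Φ ⟨hMon, hAct, hSup, hTen, hMin⟩ =>
      PhiA_antiPhi_of_tenLax T hMon hAct hSup hTen hMin
  · exact fun A ⟨hA, _⟩ => ⟨mon_PhiA, act_PhiA T hA, supC_PhiA, tenLax_PhiA T, minC_PhiA hA⟩
  · exact fun Φ ⟨hMon, hAct, hSup, hMin⟩ => PhiA_antiPhi_of_noNilpotent T hMon hAct hSup hMin hNil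
  · exact fun A ⟨hA, _⟩ => ⟨mon_PhiA, act_PhiA T hA, supC_PhiA, minC_PhiA hA⟩
end

section
/- Let ⊗ = * be multiplication on [0,1], X a partially ordered compact space, and L ⊆ CX a subset closed under u-powers and under truncated subtraction −⊖u for all u ∈ [0,1]. Assume the cone L is initial, i.e. for all x, y ∈ X, x ≥ y if and only if ψ(x) ≤ ψ(y) for all ψ ∈ L. Then L satisfies the separation condition (Sep). -/
open unitInterval Set

/-- The residuation `hom(u,v)` of multiplication on `[0,1]`:
`min (v/u) 1` for `u ≠ 0`, and `1` for `u = 0`. -/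
noncomputable def phom (u v : I) : I :=
  if h : (u : ℝ) = 0 then 1
  else ⟨min ((v : ℝ) / (u : ℝ)) 1,
    ⟨le_min (div_nonneg v.2.1 u.2.1) zero_le_one, min_le_right _ _⟩⟩

namespace CMap

variable {X : Type*} [TopologicalSpace X] [Preorder X]

/-- The `u`-power `(ψ ⋔ u)(x) = hom(u, ψ(x))` for the multiplication t-norm. -/
noncomputable def ppow (ψ : CMap X) (u : I) : CMap X where
  toFun x := phom u (ψ.toFun x)
  continuous' := by
    unfold phom
    split_ifs with h
    · exact continuous_const
    · exact Continuous.subtype_mk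
        (((continuous_subtype_val.comp ψ.continuous').div_const _).min continuous_const) _
  antitone' := fun a b h => by
    unfold phom
    split_ifs with h0
    · exact le_rfl
    · have hu : (0 : ℝ) < (u : ℝ) := lt_of_le_of_ne u.2.1 (Ne.symm h0)
      have hab := Subtype.coe_le_coe.2 (ψ.antitone' h)
      exact Subtype.mk_le_mk.mpr (min_le_min (by gcongr) le_rfl)

end CMap

/-- The separation condition `(Sep)` for a subset `L ⊆ CX`. -/
def SepCond {X : Type*} [TopologicalSpace X] [Preorder X] (L : Set (CMap X)) : Prop :=
  ∀ x y : X, ¬ y ≤ x → ∃ ψ' ∈ L, ∃ U : Set X, IsOpen U ∧ y ∈ U ∧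
    ψ'.toFun x = 1 ∧ ∀ z ∈ U, ψ'.toFun z = 0

/-!
If `¬ y ≤ x`, initiality gives `ψ ∈ L` with `ψ y < ψ x`. Pick `m` strictly between. Then `ψ ⊖ m`
vanishes on the open neighbourhood `{z | ψ z < m}` of `y` and takes the value `u := ψ x ⊖ m > 0`
at `x`; the power `(ψ ⊖ m) ⋔ u` rescales it to `1` at `x` while keeping it `0` on that set.
-/

theorem phom_self (u : I) : phom u u = 1 := by
  unfold phom
  split_ifs with hu
  · rfl
  · exact Subtype.ext (by simp [div_self hu])

theorem phom_zero_right {u : I} (hu : u ≠ 0) : phom u 0 = 0 := by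
  have hu' : (u : ℝ) ≠ 0 := fun h => hu (Subtype.ext h)
  unfold phom
  rw [dif_neg hu']
  exact Subtype.ext (by simp)

namespace CMap

theorem tsubI_eq_zero_of_le {a u : I} (h : a ≤ u) : tsubI a u = 0 :=
  Subtype.ext (max_eq_right (sub_nonpos.mpr h))

theorem tsubI_ne_zero_of_lt {a u : I} (h : u < a) : tsubI a u ≠ 0 := by
  intro h0
  have hle : (a : ℝ) - u ≤ 0 := (le_max_left _ _).trans (congrArg Subtype.val h0).le
  linarith [Subtype.coe_lt_coe.mpr h]

variable {X : Type*} [TopologicalSpace X] [Preorder X]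

theorem ppow_tsub_apply_self (ψ : CMap X) (m : I) (x : X) :
    ((ψ.tsub m).ppow (tsubI (ψ.toFun x) m)).toFun x = 1 :=
  phom_self _

theorem ppow_tsub_apply_eq_zero (ψ : CMap X) {m : I} {x z : X} (hx : m < ψ.toFun x)
    (hz : ψ.toFun z ≤ m) : ((ψ.tsub m).ppow (tsubI (ψ.toFun x) m)).toFun z = 0 := by
  change phom _ (tsubI (ψ.toFun z) m) = 0
  rw [tsubI_eq_zero_of_le hz]
  exact phom_zero_right (tsubI_ne_zero_of_lt hx)

end CMap

theorem multiplication_initial_implies_sep_general {X : Type*} [TopologicalSpace X]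
    [PartialOrder X]
    (L : Set (CMap X))
    (hpow : ∀ u : I, ∀ ψ ∈ L, CMap.ppow ψ u ∈ L)
    (hsub : ∀ u : I, ∀ ψ ∈ L, CMap.tsub ψ u ∈ L)
    (hinit : ∀ x y : X, y ≤ x ↔ ∀ ψ ∈ L, ψ.toFun x ≤ ψ.toFun y) :
    SepCond L := by
  intro x y hxy
  obtain ⟨ψ, hψL, hlt⟩ : ∃ ψ ∈ L, ψ.toFun y < ψ.toFun x := by
    simpa [hinit] using hxy
  obtain ⟨m, hym, hmx⟩ := exists_between hlt
  refine ⟨(ψ.tsub m).ppow (CMap.tsubI (ψ.toFun x) m), hpow _ _ (hsub m ψ hψL),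
    {z | ψ.toFun z < m}, isOpen_lt ψ.continuous' continuous_const, hym,
    ψ.ppow_tsub_apply_self m x, fun z hz => ψ.ppow_tsub_apply_eq_zero hmx hz.le⟩

/-- For the multiplication t-norm: if `L ⊆ CX` is closed under `u`-powers and under
truncated subtraction `- ⊖ u`, and is an initial cone, then `L` satisfies `(Sep)`. -/
theorem multiplication_initial_implies_sep {X : Type*} [TopologicalSpace X] [CompactSpace X]
    [PartialOrder X] (hle : IsClosed {p : X × X | p.1 ≤ p.2})
    (L : Set (CMap X))
    (hpow : ∀ u : I, ∀ ψ ∈ L, CMap.ppow ψ u ∈ L)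
    (hsub : ∀ u : I, ∀ ψ ∈ L, CMap.tsub ψ u ∈ L)
    (hinit : ∀ x y : X, y ≤ x ↔ ∀ ψ ∈ L, ψ.toFun x ≤ ψ.toFun y) :
    SepCond L :=
  multiplication_initial_implies_sep_general L hpow hsub hinit
end
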